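/- Let $b_1, \dots, b_n \in \mathbb{C}$, $T(\alpha) := \sum_{m \leq n} b_m e(\alpha m)$, $N(h,t) := \sum_{m \leq n, m \equiv h \pmod t} b_m$, and $f_h(d) := \sum_{t \mid d} \mu(t)(d/t) N(h, d/t)$. Then for every positive integer $d$, $\frac{1}{d} \sum_{h=0}^{d-1} |f_h(d)|^2 = \sum_{a < d, (a,d)=1} |T(a/d)|^2$. -/

import Mathlib

open Finset

/-- `N(h,t) = ∑_{m ≤ n, m ≡ h (t)} b_m`. -/
noncomputable def Ncount (b : ℕ → ℂ) (n : ℕ) (h : ℤ) (t : ℕ) : ℂ :=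
  ∑ m ∈ (Finset.Icc 1 n).filter (fun (m : ℕ) => (m : ℤ) % (t : ℤ) = h % (t : ℤ)), b m

/-- `f_h(d) = ∑_{t ∣ d} μ(t) (d/t) N(h, d/t)`. -/
noncomputable def ffun (b : ℕ → ℂ) (n : ℕ) (h : ℤ) (d : ℕ) : ℂ :=
  ∑ t ∈ d.divisors,
    (ArithmeticFunction.moebius t : ℂ) * ((d / t : ℕ) : ℂ) * Ncount b n h (d / t)

/-- `T(α) = ∑_{m ≤ n} b_m e(αm)`. -/
noncomputable def Tfun (b : ℕ → ℂ) (n : ℕ) (α : ℝ) : ℂ :=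
  ∑ m ∈ Finset.Icc 1 n, b m * Complex.exp (2 * Real.pi * Complex.I * (α * m))

/-!
Expanding `N(h, d/t)` turns `f_h(d)` into `∑_m b_m c_d(m - h)`, where `c_d` is the Ramanujan sum,
because `c_d(k) = ∑_{t ∣ d} μ(t) (d/t) [d/t ∣ k]` (Möbius inversion of the coprimality condition
followed by orthogonality of additive characters). Opening up `c_d` shows that
`f_h(d) = ∑_{(a,d)=1} T(a/d) e(-ah/d)`, a discrete Fourier transform on `ℤ/dℤ`, and the identity
is Parseval's formula for it.
-/

open scoped ArithmeticFunction.Moebius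
open ZMod (stdAddChar)

lemma sum_divisors_moebius {R : Type*} [Ring R] (m : ℕ) :
    ∑ t ∈ m.divisors, (μ t : R) = if m = 1 then 1 else 0 := by
  rw [← ArithmeticFunction.one_apply (R := R), ← ArithmeticFunction.coe_moebius_mul_coe_zeta,
    ArithmeticFunction.coe_mul_zeta_apply]
  simp only [ArithmeticFunction.intCoe_apply]

lemma sum_filter_coprime_eq_sum_moebius {R : Type*} [CommRing R] {q : ℕ} (hq : q ≠ 0)
    (s : Finset ℕ) (f : ℕ → R) :
    ∑ a ∈ s with a.Coprime q, f a = ∑ t ∈ q.divisors, (μ t : R) * ∑ a ∈ s with t ∣ a, f a := by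
  have indicator (a : ℕ) :
      ∑ t ∈ q.divisors with t ∣ a, (μ t : R) = if a.Coprime q then 1 else 0 := by
    have : {t ∈ q.divisors | t ∣ a} = (a.gcd q).divisors := by
      ext t
      simp [Nat.dvd_gcd_iff, hq, and_comm]
    simp only [this, sum_divisors_moebius, Nat.coprime_iff_gcd_eq_one]
  calc ∑ a ∈ s with a.Coprime q, f a
      = ∑ a ∈ s, (∑ t ∈ q.divisors with t ∣ a, (μ t : R)) * f a := by
        simp only [indicator, ite_mul, one_mul, zero_mul, sum_filter]
    _ = _ := by
        simp_rw [sum_filter, sum_mul, mul_sum, ite_mul, mul_ite, zero_mul, mul_zero]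
        exact sum_comm

lemma sum_range_eq_sum_zmod {M : Type*} [AddCommMonoid M] (N : ℕ) [NeZero N] (f : ZMod N → M) :
    ∑ j ∈ range N, f j = ∑ x, f x :=
  sum_nbij' (↑) ZMod.val (fun _ _ => mem_univ _) (fun x _ => mem_range.2 (ZMod.val_lt x))
    (fun _ hj => ZMod.val_natCast_of_lt (mem_range.1 hj)) (fun x _ => ZMod.natCast_zmod_val x)
    (fun _ _ => rfl)

lemma sum_range_stdAddChar_mul (N : ℕ) [NeZero N] (k : ZMod N) :
    ∑ j ∈ range N, stdAddChar ((j : ZMod N) * k) = if k = 0 then (N : ℂ) else 0 := by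
  rw [sum_range_eq_sum_zmod N (fun x => stdAddChar (x * k)),
    AddChar.sum_mulShift k (ZMod.isPrimitive_stdAddChar N), ZMod.card, Nat.cast_ite,
    Nat.cast_zero]

lemma stdAddChar_natCast_mul (t r : ℕ) [NeZero t] [NeZero r] (x : ℤ) :
    stdAddChar ((t : ZMod (t * r)) * (x : ZMod (t * r))) = stdAddChar (x : ZMod r) := by
  rw [← Int.cast_natCast, ← Int.cast_mul, ZMod.stdAddChar_coe, ZMod.stdAddChar_coe]
  congr 1
  push_cast
  field_simp [NeZero.ne t]

lemma sum_range_mul_filter_dvd {M : Type*} [AddCommMonoid M] {t : ℕ} (ht : t ≠ 0) (r : ℕ)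
    (f : ℕ → M) : ∑ a ∈ range (t * r) with t ∣ a, f a = ∑ j ∈ range r, f (t * j) := by
  refine sum_nbij' (· / t) (t * ·) ?_ ?_ ?_ ?_ ?_
  · intro a ha
    simp only [mem_filter, mem_range] at ha ⊢
    exact Nat.div_lt_of_lt_mul ha.1
  · intro j hj
    simp only [mem_filter, mem_range] at hj ⊢
    exact ⟨Nat.mul_lt_mul_of_pos_left hj (Nat.pos_of_ne_zero ht), dvd_mul_right t j⟩
  · intro a ha
    exact Nat.mul_div_cancel' (mem_filter.1 ha).2
  · intro j _
    exact Nat.mul_div_cancel_left j (Nat.pos_of_ne_zero ht)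
  · intro a ha
    rw [Nat.mul_div_cancel' (mem_filter.1 ha).2]

noncomputable def ramanujanSum (q : ℕ) [NeZero q] (k : ℤ) : ℂ :=
  ∑ a ∈ range q with a.Coprime q, stdAddChar ((a : ZMod q) * (k : ZMod q))

theorem ramanujanSum_eq_sum_moebius (q : ℕ) [NeZero q] (k : ℤ) :
    ramanujanSum q k = ∑ t ∈ q.divisors,
      (μ t : ℂ) * if ((q / t : ℕ) : ℤ) ∣ k then ((q / t : ℕ) : ℂ) else 0 := by
  rw [ramanujanSum, sum_filter_coprime_eq_sum_moebius (NeZero.ne q)]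
  refine sum_congr rfl fun t ht => ?_
  obtain ⟨r, rfl⟩ := Nat.dvd_of_mem_divisors ht
  have : NeZero t := ⟨left_ne_zero_of_mul (NeZero.ne (t * r))⟩
  have : NeZero r := ⟨right_ne_zero_of_mul (NeZero.ne (t * r))⟩
  have rescale (j : ℕ) : stdAddChar (((t * j : ℕ) : ZMod (t * r)) * (k : ZMod (t * r)))
      = stdAddChar ((j : ZMod r) * (k : ZMod r)) := by
    simpa [mul_assoc] using stdAddChar_natCast_mul t r (j * k)
  rw [sum_range_mul_filter_dvd (NeZero.ne t), Nat.mul_div_cancel_left r (NeZero.pos t)]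
  simp only [rescale, sum_range_stdAddChar_mul, ZMod.intCast_zmod_eq_zero_iff_dvd]

lemma Ncount_eq_sum_ite (b : ℕ → ℂ) (n : ℕ) (h : ℤ) (t : ℕ) :
    Ncount b n h t = ∑ m ∈ Icc 1 n, if (t : ℤ) ∣ m - h then b m else 0 := by
  rw [Ncount, sum_filter]
  exact sum_congr rfl fun m _ => if_congr (Int.modEq_comm.trans Int.modEq_iff_dvd) rfl rfl

lemma ffun_eq_sum_ramanujanSum (b : ℕ → ℂ) (n : ℕ) (h : ℤ) (d : ℕ) [NeZero d] :
    ffun b n h d = ∑ m ∈ Icc 1 n, b m * ramanujanSum d (m - h) := by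
  simp_rw [ramanujanSum_eq_sum_moebius, ffun, Ncount_eq_sum_ite, mul_sum]
  rw [sum_comm]
  refine sum_congr rfl fun m _ => sum_congr rfl fun t _ => ?_
  split_ifs <;> ring

lemma Tfun_natCast_div (b : ℕ → ℂ) (n d : ℕ) [NeZero d] (a : ℕ) :
    Tfun b n (a / d) = ∑ m ∈ Icc 1 n, b m * stdAddChar ((a : ZMod d) * (m : ZMod d)) := by
  refine sum_congr rfl fun m _ => ?_
  have hexp := ZMod.stdAddChar_coe (N := d) (a * m)
  push_cast at hexp
  rw [hexp]
  push_cast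
  ring_nf

lemma ffun_eq_sum_Tfun (b : ℕ → ℂ) (n : ℕ) (h : ℤ) (d : ℕ) [NeZero d] :
    ffun b n h d = ∑ a ∈ range d with a.Coprime d,
      Tfun b n (a / d) * stdAddChar (-((a : ZMod d) * (h : ZMod d))) := by
  simp_rw [ffun_eq_sum_ramanujanSum, ramanujanSum, Tfun_natCast_div, mul_sum, sum_mul]
  rw [sum_comm]
  refine sum_congr rfl fun a _ => sum_congr rfl fun m _ => ?_
  push_cast
  rw [mul_sub, sub_eq_add_neg, AddChar.map_add_eq_mul, mul_assoc]

lemma sum_range_norm_sq_sum_mul_stdAddChar (d : ℕ) [NeZero d] {A : Finset ℕ}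
    (hA : A ⊆ range d) (g : ℕ → ℂ) :
    ∑ h ∈ range d, ‖∑ a ∈ A, g a * stdAddChar (-((a : ZMod d) * (h : ZMod d)))‖ ^ 2
      = d * ∑ a ∈ A, ‖g a‖ ^ 2 := by
  have orthogonality (a a' : ℕ) (ha : a ∈ A) (ha' : a' ∈ A) :
      ∑ h ∈ range d, g a * stdAddChar (-((a : ZMod d) * (h : ZMod d))) *
        (starRingEnd ℂ (g a') * stdAddChar ((a' : ZMod d) * (h : ZMod d)))
        = if a = a' then d * (g a * starRingEnd ℂ (g a)) else 0 := by
    have hcast : (a' : ZMod d) - a = 0 ↔ a = a' := by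
      rw [sub_eq_zero, ZMod.natCast_eq_natCast_iff', Nat.mod_eq_of_lt (mem_range.1 (hA ha)),
        Nat.mod_eq_of_lt (mem_range.1 (hA ha')), eq_comm]
    calc _ = g a * starRingEnd ℂ (g a') *
          ∑ h ∈ range d, stdAddChar ((h : ZMod d) * ((a' : ZMod d) - (a : ZMod d))) := by
          rw [mul_sum]
          refine sum_congr rfl fun h _ => ?_
          rw [mul_sub, sub_eq_neg_add, AddChar.map_add_eq_mul]
          ring_nf
      _ = _ := by
          simp only [sum_range_stdAddChar_mul, hcast, mul_ite, mul_zero]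
          split_ifs with h
          · subst h; ring
          · rfl
  apply Complex.ofReal_injective
  push_cast
  simp_rw [← Complex.mul_conj', map_sum, map_mul, ← AddChar.map_neg_eq_conj, neg_neg, sum_mul_sum]
  calc _ = ∑ a ∈ A, ∑ a' ∈ A, ∑ h ∈ range d, g a * stdAddChar (-((a : ZMod d) * (h : ZMod d))) *
        (starRingEnd ℂ (g a') * stdAddChar ((a' : ZMod d) * (h : ZMod d))) := by
        rw [sum_comm]
        exact sum_congr rfl fun a _ => sum_comm
    _ = _ := by
        rw [mul_sum]
        refine sum_congr rfl fun a ha => ?_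
        rw [sum_congr rfl (orthogonality a · ha ·), sum_ite_eq A a, if_pos ha]

theorem stmt13_general (b : ℕ → ℂ) (n : ℕ) (d : ℕ) :
    (1 / (d : ℝ)) * ∑ h ∈ Finset.range d, ‖ffun b n (h : ℤ) d‖ ^ 2 =
      ∑ a ∈ (Finset.range d).filter (fun a => Nat.Coprime a d),
        ‖Tfun b n ((a : ℝ) / (d : ℝ))‖ ^ 2 := by
  obtain rfl | hd := eq_or_ne d 0
  · simp
  have : NeZero d := ⟨hd⟩
  simp only [ffun_eq_sum_Tfun, Int.cast_natCast]
  rw [sum_range_norm_sq_sum_mul_stdAddChar d (filter_subset _ _), ← mul_assoc, one_div,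
    inv_mul_cancel₀ (Nat.cast_ne_zero.2 hd), one_mul]

theorem stmt13 (b : ℕ → ℂ) (n : ℕ) (hn : 1 ≤ n) (d : ℕ) (hd : 1 ≤ d) :
    (1 / (d : ℝ)) * ∑ h ∈ Finset.range d, ‖ffun b n (h : ℤ) d‖ ^ 2 =
      ∑ a ∈ (Finset.range d).filter (fun a => Nat.Coprime a d),
        ‖Tfun b n ((a : ℝ) / (d : ℝ))‖ ^ 2 :=
  stmt13_general b n d
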